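/- If the GF dimension of a countable collection C of infinite languages over U is infinite, then C cannot be uniformly generated with feedback. -/

import Mathlib

/-! STATEMENT 15: If the GF dimension of a countable collection C of infinite languages over U is infinite, then C cannot be uniformly generated with feedback. -/

/-- A generator strategy in the feedback model: `query h x` is the membership query
`y_t` issued after receiving input `x_t` with history `h` of completed rounds, and
`out h x y a` is the output `z_t` after the answer `a_t` to the query. -/
structure FGen (U : Type) where
  query : List (U × U × Bool × U) → U → U
  out : List (U × U × Bool × U) → U → U → Bool → U

/-- An adversary strategy in the feedback model: `inp h` is the next input `x_t`,
and `ans h x y` is the yes/no answer `a_t` to the generator's query `y_t`. -/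
structure FAdv (U : Type) where
  inp : List (U × U × Bool × U) → U
  ans : List (U × U × Bool × U) → U → U → Bool

/-- The history of the first `t` completed rounds `(x_s, y_s, a_s, z_s)` of the
interaction between `Adv` and `Gen`. -/
def fRun {U : Type} (Adv : FAdv U) (Gen : FGen U) : ℕ → List (U × U × Bool × U)
  | 0 => []
  | t + 1 =>
      let h := fRun Adv Gen t
      let x := Adv.inp h
      let y := Gen.query h x
      let a := Adv.ans h x y
      h ++ [(x, y, a, Gen.out h x y a)]

/-- The input `x_t` of round `t` (0-indexed) of the transcript T(Adv, Gen). -/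
def fX {U : Type} (Adv : FAdv U) (Gen : FGen U) (t : ℕ) : U :=
  Adv.inp (fRun Adv Gen t)

/-- The generator's query `y_t` of round `t`. -/
def fY {U : Type} (Adv : FAdv U) (Gen : FGen U) (t : ℕ) : U :=
  Gen.query (fRun Adv Gen t) (fX Adv Gen t)

/-- The adversary's answer `a_t` of round `t`. -/
def fA {U : Type} (Adv : FAdv U) (Gen : FGen U) (t : ℕ) : Bool :=
  Adv.ans (fRun Adv Gen t) (fX Adv Gen t) (fY Adv Gen t)

/-- The generator's output `z_t` of round `t`. -/
def fZ {U : Type} (Adv : FAdv U) (Gen : FGen U) (t : ℕ) : U :=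
  Gen.out (fRun Adv Gen t) (fX Adv Gen t) (fY Adv Gen t) (fA Adv Gen t)

/-- `S_r`: the set of distinct inputs among the first `r` rounds. -/
def fS {U : Type} (Adv : FAdv U) (Gen : FGen U) (r : ℕ) : Set U :=
  fX Adv Gen '' {t | t < r}

/-- The adversary strategy `Adv` is consistent with the language `K` (against `Gen`):
the inputs form an enumeration of `K` and every answer is truthful for `K`. -/
def fConsistent {U : Type} (Adv : FAdv U) (Gen : FGen U) (K : Set U) : Prop :=
  (∀ t, fX Adv Gen t ∈ K) ∧ (∀ w ∈ K, ∃ t, fX Adv Gen t = w) ∧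
    ∀ t, fA Adv Gen t = true ↔ fY Adv Gen t ∈ K

/-- `C_r(T)`: the languages of `C` consistent with the transcript up to round `r`
(inputs belong to the language and all answers are truthful for it). -/
def fCons {U : Type} (C : Set (Set U)) (Adv : FAdv U) (Gen : FGen U) (r : ℕ) :
    Set (Set U) :=
  {Lang ∈ C | ∀ t < r, fX Adv Gen t ∈ Lang ∧ (fA Adv Gen t = true ↔ fY Adv Gen t ∈ Lang)}

/-- The effective intersection `E_r(T)`. -/
def fE {U : Type} (C : Set (Set U)) (Adv : FAdv U) (Gen : FGen U) (r : ℕ) : Set U :=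
  ⋂₀ fCons C Adv Gen r \ fS Adv Gen r

/-- The GF dimension of `C`: the supremum of all `d ∈ ℕ` such that for every
generator strategy there are `K ∈ C` and an adversary strategy consistent with `K`
whose transcript has a finite round `r ≥ d` with `|S_r| ≥ d` and `E_r(T) = ∅`. -/
noncomputable def gfDim {U : Type} (C : Set (Set U)) : ℕ∞ :=
  sSup {e : ℕ∞ | ∃ d : ℕ, e = (d : ℕ∞) ∧
    ∀ Gen : FGen U, ∃ K ∈ C, ∃ Adv : FAdv U,
      fConsistent Adv Gen K ∧
      ∃ r : ℕ, d ≤ r ∧ d ≤ (fS Adv Gen r).ncard ∧ fE C Adv Gen r = ∅}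

/-- `C` can be uniformly generated with feedback: some generator strategy `Gen` and
bound `t*` are such that against every adversary consistent with any `K ∈ C`, the
output of every round `t` with `|S_t| ≥ t*` lies in `K \ S_t` (here `S_t` counts the
inputs up to and including round `t`). -/
def UniformGenWithFeedback {U : Type} (C : Set (Set U)) : Prop :=
  ∃ Gen : FGen U, ∃ tstar : ℕ,
    ∀ K ∈ C, ∀ Adv : FAdv U, fConsistent Adv Gen K →
      ∀ t : ℕ, tstar ≤ (fS Adv Gen (t + 1)).ncard →
        fZ Adv Gen t ∈ K \ fS Adv Gen (t + 1)


/-!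
Let `Gen` generate uniformly with bound `t*`. Since the GF dimension is infinite, there is an
adversary for `Gen`, consistent with some `K ∈ C`, reaching a round `r` with `|S_r| > t*` and
`E_r = ∅`. The output `z` of that round avoids `S_r`, so it lies outside some language `L` still
consistent with the first `r` rounds. An adversary for `L` that replays those rounds and then
enumerates `L` elicits the same output `z` with the same `S_r`, so uniform generation forces
`z ∈ L`.
-/

lemma fRun_length {U : Type} (Adv : FAdv U) (Gen : FGen U) (t : ℕ) :
    (fRun Adv Gen t).length = t := by
  induction t with
  | zero => rfl
  | succ n ih => simp [fRun, ih]

namespace FAdv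

variable {U : Type}

open Classical in
/-- Plays like `Adv` during the first `r` rounds, then enumerates `f` and answers truthfully
for `L`. -/
noncomputable def splice (Adv : FAdv U) (r : ℕ) (f : ℕ → U) (L : Set U) : FAdv U where
  inp h := if h.length < r then Adv.inp h else f (h.length - r)
  ans h x y := if h.length < r then Adv.ans h x y else decide (y ∈ L)

variable (Adv : FAdv U) (Gen : FGen U) {r t : ℕ} (f : ℕ → U) (L : Set U)

lemma splice_inp_of_lt {h : List (U × U × Bool × U)} (hh : h.length < r) :
    (Adv.splice r f L).inp h = Adv.inp h :=
  if_pos hh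

lemma splice_ans_of_lt {h : List (U × U × Bool × U)} (hh : h.length < r) (x y : U) :
    (Adv.splice r f L).ans h x y = Adv.ans h x y :=
  if_pos hh

lemma fRun_splice (ht : t ≤ r) : fRun (Adv.splice r f L) Gen t = fRun Adv Gen t := by
  induction t with
  | zero => rfl
  | succ n ih =>
    have hlen : (fRun Adv Gen n).length < r := by rw [fRun_length]; omega
    simp only [fRun, ih (by omega), splice_inp_of_lt Adv f L hlen,
      splice_ans_of_lt Adv f L hlen]

lemma fX_splice_of_lt (ht : t < r) : fX (Adv.splice r f L) Gen t = fX Adv Gen t := by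
  rw [fX, fRun_splice Adv Gen f L ht.le, splice_inp_of_lt Adv f L (by rwa [fRun_length]), fX]

lemma fY_splice_of_lt (ht : t < r) : fY (Adv.splice r f L) Gen t = fY Adv Gen t := by
  rw [fY, fRun_splice Adv Gen f L ht.le, fX_splice_of_lt Adv Gen f L ht, fY]

lemma fA_splice_of_lt (ht : t < r) : fA (Adv.splice r f L) Gen t = fA Adv Gen t := by
  rw [fA, fRun_splice Adv Gen f L ht.le, fX_splice_of_lt Adv Gen f L ht,
    fY_splice_of_lt Adv Gen f L ht, splice_ans_of_lt Adv f L (by rwa [fRun_length]), fA]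

lemma fZ_splice_of_lt (ht : t < r) : fZ (Adv.splice r f L) Gen t = fZ Adv Gen t := by
  rw [fZ, fRun_splice Adv Gen f L ht.le, fX_splice_of_lt Adv Gen f L ht,
    fY_splice_of_lt Adv Gen f L ht, fA_splice_of_lt Adv Gen f L ht, fZ]

lemma fX_splice_of_le (ht : r ≤ t) : fX (Adv.splice r f L) Gen t = f (t - r) := by
  simp [fX, splice, fRun_length, Nat.not_lt.mpr ht]

lemma fA_splice_of_le (ht : r ≤ t) :
    fA (Adv.splice r f L) Gen t = true ↔ fY (Adv.splice r f L) Gen t ∈ L := by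
  simp [fA, splice, fRun_length, Nat.not_lt.mpr ht]

lemma fS_splice : fS (Adv.splice r f L) Gen r = fS Adv Gen r :=
  Set.image_congr fun _ ht => fX_splice_of_lt Adv Gen f L ht

lemma fConsistent_splice
    (hL : ∀ t < r, fX Adv Gen t ∈ L ∧ (fA Adv Gen t = true ↔ fY Adv Gen t ∈ L))
    (hf : Set.range f = L) : fConsistent (Adv.splice r f L) Gen L := by
  refine ⟨fun t => ?_, ?_, fun t => ?_⟩
  · rcases lt_or_ge t r with htr | htr
    · rw [fX_splice_of_lt Adv Gen f L htr]
      exact (hL t htr).1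
    · rw [fX_splice_of_le Adv Gen f L htr, ← hf]
      exact Set.mem_range_self _
  · rintro w hw
    obtain ⟨n, rfl⟩ := hf ▸ hw
    exact ⟨n + r, by rw [fX_splice_of_le Adv Gen f L (by omega), Nat.add_sub_cancel]⟩
  · rcases lt_or_ge t r with htr | htr
    · rw [fA_splice_of_lt Adv Gen f L htr, fY_splice_of_lt Adv Gen f L htr]
      exact (hL t htr).2
    · exact fA_splice_of_le Adv Gen f L htr

end FAdv

section

variable {U : Type} {C : Set (Set U)} {Adv : FAdv U} {Gen : FGen U} {r : ℕ}

lemma exists_gfDim_witness_ge_of_gfDim_eq_top (h : gfDim C = ⊤) (n : ℕ) :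
    ∃ d : ℕ, n ≤ d ∧ ∀ Gen : FGen U, ∃ K ∈ C, ∃ Adv : FAdv U, fConsistent Adv Gen K ∧
      ∃ r : ℕ, d ≤ r ∧ d ≤ (fS Adv Gen r).ncard ∧ fE C Adv Gen r = ∅ := by
  by_contra hsmall
  have hle : gfDim C ≤ n := sSup_le <| by
    rintro _ ⟨d, rfl, hd⟩
    by_contra! hnd
    exact hsmall ⟨d, by exact_mod_cast hnd.le, hd⟩
  exact ENat.natCast_ne_top n (top_le_iff.mp (h ▸ hle))

lemma exists_mem_fCons_not_mem_of_fE_eq_empty (hE : fE C Adv Gen r = ∅) {z : U}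
    (hz : z ∉ fS Adv Gen r) : ∃ L ∈ fCons C Adv Gen r, z ∉ L := by
  by_contra! hall
  exact (Set.eq_empty_iff_forall_notMem.mp hE) z ⟨Set.mem_sInter.mpr hall, hz⟩

lemma exists_fConsistent_of_mem_fCons [Countable U] {L : Set U}
    (hL : L ∈ fCons C Adv Gen (r + 1)) :
    ∃ Adv' : FAdv U, fConsistent Adv' Gen L ∧
      fS Adv' Gen (r + 1) = fS Adv Gen (r + 1) ∧ fZ Adv' Gen r = fZ Adv Gen r := by
  obtain ⟨f, hf⟩ := L.to_countable.exists_eq_range ⟨_, (hL.2 0 r.succ_pos).1⟩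
  exact ⟨Adv.splice (r + 1) f L, Adv.fConsistent_splice Gen f L hL.2 hf.symm,
    Adv.fS_splice Gen f L, Adv.fZ_splice_of_lt Gen f L r.lt_succ_self⟩

end

theorem gfDim_infinite_implies_no_uniform_generation_with_feedback_general
    (U : Type) [Countable U]
    (C : Set (Set U))
    (h : gfDim C = ⊤) :
    ¬ UniformGenWithFeedback C := by
  rintro ⟨Gen, tstar, hGen⟩
  obtain ⟨d, hd, hdim⟩ := exists_gfDim_witness_ge_of_gfDim_eq_top h (tstar + 1)
  obtain ⟨K, hK, Adv, hcons, r, hdr, hcard, hE⟩ := hdim Gen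
  obtain ⟨t, rfl⟩ : ∃ t, r = t + 1 := Nat.exists_eq_add_of_le' (by omega)
  have htstar : tstar ≤ (fS Adv Gen (t + 1)).ncard := by omega
  obtain ⟨L, hL, hzL⟩ :=
    exists_mem_fCons_not_mem_of_fE_eq_empty hE (hGen K hK Adv hcons t htstar).2
  obtain ⟨Adv', hcons', hS, hZ⟩ := exists_fConsistent_of_mem_fCons hL
  exact hzL (hZ ▸ (hGen L hL.1 Adv' hcons' t (hS ▸ htstar)).1)

theorem gfDim_infinite_implies_no_uniform_generation_with_feedback
    (U : Type) [Countable U] [Infinite U]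
    (C : Set (Set U)) (hC : C.Countable) (hInf : ∀ L ∈ C, L.Infinite)
    (h : gfDim C = ⊤) :
    ¬ UniformGenWithFeedback C :=
  gfDim_infinite_implies_no_uniform_generation_with_feedback_general U C h
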